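/- Assume there is a real sequence (L_m)_{m≥0} such that L^r(k) := ∑_{m≥0} L_m·k^m converges absolutely for every integer k ≥ 1 and B^r_k = L^r(k)/k for all k ≥ 1. Then the formal power series Y(z) := ∑_{k≥1} B^r_k·B_{2(k−1)}(r)·z^k solves Y' = L^r(1+θ)·ψ_μ(Y), where θ = z·d/dz; that is, for every n ≥ 0, (n+1)·[z^{n+1}]Y = L^r(n+1)·[z^n](ψ_μ∘Y), where ψ_μ(Y) = 1 + ∑_{k≥1} μ_{k+1}·Y(z)^k is the formal composition. -/

import Mathlib

open scoped Classical

/-- Rooted plane trees: a tree is a root together with the ordered list of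
the subtrees hanging from its children (left-to-right order). -/
inductive PTree where
  | node : List PTree → PTree

namespace PTree

instance : Inhabited PTree := ⟨.node []⟩

/-- number of nodes -/
def size : PTree → ℕ
  | node l => 1 + (l.attach.map (fun c => size c.1)).sum
decreasing_by
  have := List.sizeOf_lt_of_mem c.2
  simp only [node.sizeOf_spec]; omega

/-- tree factorial: `t! = |t| * ∏ᵢ tᵢ!` -/
def tfact : PTree → ℕ
  | node l => size (node l) * (l.attach.map (fun c => tfact c.1)).prod
decreasing_by
  have := List.sizeOf_lt_of_mem c.2
  simp only [node.sizeOf_spec]; omega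

/-- Shape equivalence: two plane trees have the same underlying rooted tree,
i.e. there is a bijection between children matching shape-equivalent subtrees. -/
inductive ShapeEq : PTree → PTree → Prop
  | node {l₁ l₂ : List PTree} (e : Fin l₁.length ≃ Fin l₂.length)
      (h : ∀ i, ShapeEq (l₁.get i) (l₂.get (e i))) :
      ShapeEq (node l₁) (node l₂)

lemma size_pos (t : PTree) : 0 < t.size := by
  cases t; simp [size]

/-- The plane tree encoded by a parent function `p : Fin n → Fin n`:
`shapeAux n p fuel i` is the subtree rooted at node `i`, whose children are the
`j` with `p j = i` and `i < j` (ordered by label). `fuel = n` suffices. -/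
def shapeAux (n : ℕ) (p : Fin n → Fin n) : ℕ → Fin n → PTree
  | 0, _ => node []
  | fuel+1, i =>
      node (((List.finRange n).filter (fun j => decide (p j = i ∧ i < j))).map
        (shapeAux n p fuel))

/-- The plane tree encoded by a parent function (rooted at node `0`). -/
def shapeOf {n : ℕ} (p : Fin n → Fin n) : PTree :=
  if h : 0 < n then shapeAux n p n ⟨0, h⟩ else node []

/-- `alpha t` is the number of rooted labelled (increasing) trees of shape `t`:
labelled trees are encoded by their parent function, the root carrying the
label `0` and labels increasing away from the root. -/
noncomputable def alpha (t : PTree) : ℕ :=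
  Nat.card {p : Fin t.size → Fin t.size //
    p ⟨0, t.size_pos⟩ = ⟨0, t.size_pos⟩ ∧
    (∀ j : Fin t.size, 0 < (j : ℕ) → (p j : ℕ) < j) ∧
    ShapeEq (shapeOf p) t}

/-- `kappa t` is the number of rooted plane trees of shape `t`. -/
noncomputable def kappa (t : PTree) : ℕ := Nat.card {t' : PTree // ShapeEq t' t}

/-- symmetry factor: `σ(B₊(t₁^{n₁},…,t_m^{n_m})) = ∏ᵢ nᵢ! σ(tᵢ)^{nᵢ}`. -/
noncomputable def sym : PTree → ℕ
  | node l =>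
      (∏ j : Fin l.length,
        (l.take ((j : ℕ) + 1)).countP (fun c => decide (ShapeEq c (l.get j)))) *
      (l.attach.map (fun c => sym c.1)).prod
decreasing_by
  have := List.sizeOf_lt_of_mem c.2
  simp only [node.sizeOf_spec]; omega

/-- elementary differentials: `δ_• = 1`, `δ_t = k! ψ_k ∏ᵢ δ_{tᵢ}`. -/
def delta (ψ : ℕ → ℝ) : PTree → ℝ
  | node l =>
      (Nat.factorial l.length : ℝ) * ψ l.length *
      (l.attach.map (fun c => delta ψ c.1)).prod
decreasing_by
  have := List.sizeOf_lt_of_mem c.2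
  simp only [node.sizeOf_spec]; omega

/-- bare Green function with weights `B`: `B(t) = B_{|t|} ∏ᵢ B(tᵢ)`. -/
def bare (B : ℕ → ℝ) : PTree → ℝ
  | node l => B (size (node l)) * (l.attach.map (fun c => bare B c.1)).prod
decreasing_by
  have := List.sizeOf_lt_of_mem c.2
  simp only [node.sizeOf_spec]; omega

/-- `wt ψ t = ∏_{v ∈ t} ψ (d v)` where `d v` is the outdegree of `v`. -/
def wt (ψ : ℕ → ℝ) : PTree → ℝ
  | node l => ψ l.length * (l.attach.map (fun c => wt ψ c.1)).prod
decreasing_by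
  have := List.sizeOf_lt_of_mem c.2
  simp only [node.sizeOf_spec]; omega

/-- `nodeProd B t = ∏_{w ≠ root} B_{|t_w|}`, product over non-root nodes of `t`. -/
def nodeProd (B : ℕ → ℝ) : PTree → ℝ
  | node l => (l.attach.map (fun c => B (size c.1) * nodeProd B c.1)).prod
decreasing_by
  have := List.sizeOf_lt_of_mem c.2
  simp only [node.sizeOf_spec]; omega

/-- `R` is a set of representatives of the rooted trees with `n` nodes:
every plane tree of size `n` is shape-equivalent to exactly one member of `R`. -/
def IsTransversal (n : ℕ) (R : Finset PTree) : Prop :=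
  (∀ t ∈ R, size t = n) ∧
  ∀ t : PTree, size t = n → ∃! u, u ∈ R ∧ ShapeEq t u

end PTree

/-! `[zⁿ] Yʲ` enumerates ordered forests of `j` trees with `n` nodes in total, i.e. the trees
with `n + 1` nodes and root degree `j` with their root removed; a tree's weight factors at the
root as `ψ_{d(root)}` times the weights `B_{|c|} ∏ …` of the planted subtrees. Hence
`[zⁿ] ψ_μ(Y) = B_{2n}(r)`, while
`[z^{n+1}] Y = B^r_{n+1} B_{2n}(r) = L^r(n+1) B_{2n}(r) / (n+1)`. -/

namespace PTree

def children : PTree → List PTree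
  | node l => l

@[simp] lemma children_node (l : List PTree) : (node l).children = l := rfl

@[simp] lemma node_children (t : PTree) : node t.children = t := by cases t; rfl

lemma size_node (l : List PTree) : size (node l) = 1 + (l.map size).sum := by
  rw [size, List.attach_map_val]

lemma nodeProd_node (B : ℕ → ℝ) (l : List PTree) :
    nodeProd B (node l) = (l.map fun c => B (size c) * nodeProd B c).prod := by
  rw [nodeProd, List.attach_map_val (f := fun c => B (size c) * nodeProd B c)]

lemma wt_node (ψ : ℕ → ℝ) (l : List PTree) :
    wt ψ (node l) = ψ l.length * (l.map (wt ψ)).prod := by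
  rw [wt, List.attach_map_val]

lemma size_eq_one_add_sum_children (t : PTree) : size t = 1 + (t.children.map size).sum := by
  cases t; exact size_node _

lemma length_children_lt_size (t : PTree) : t.children.length < t.size := by
  have hle : t.children.length ≤ (t.children.map size).sum := by
    simpa using List.length_le_sum_of_one_le (t.children.map size)
      (by simpa using fun c _ => Nat.succ_le_of_lt (size_pos c))
  rw [size_eq_one_add_sum_children]
  omega

lemma eq_leaf_of_size_eq_one {t : PTree} (h : size t = 1) : t = node [] := by
  have := length_children_lt_size t
  rw [← node_children t, (List.eq_nil_iff_length_eq_zero (l := t.children)).2 (by omega)]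

lemma nodeProd_mul_wt (B : ℕ → ℝ) (ψ : ℕ → ℝ) (t : PTree) :
    nodeProd B t * wt ψ t =
      ψ t.children.length *
        (t.children.map fun c => B (size c) * (nodeProd B c * wt ψ c)).prod := by
  obtain ⟨l⟩ := t
  rw [nodeProd_node, wt_node, children_node, mul_left_comm, ← List.prod_map_mul]
  simp only [mul_assoc]

section Enumeration

variable {F : ℕ → Finset PTree} (hF : ∀ n t, t ∈ F n ↔ size t = n)
include hF

lemma eq_empty_of_size_zero : F 0 = ∅ :=
  Finset.eq_empty_of_forall_notMem fun t ht => (size_pos t).ne' ((hF 0 t).1 ht)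

lemma eq_singleton_leaf_of_size_one : F 1 = {node []} := by
  ext t
  rw [hF, Finset.mem_singleton]
  exact ⟨eq_leaf_of_size_eq_one, fun h => by simp [h, size_node]⟩

lemma sum_length_children_succ {M : Type*} [AddCommMonoid M] (f : PTree → M) (n j : ℕ) :
    ∑ t ∈ F (n + 1) with t.children.length = j + 1, f t =
      ∑ p ∈ Finset.HasAntidiagonal.antidiagonal n, ∑ s ∈ F p.1,
        ∑ t ∈ F (p.2 + 1) with t.children.length = j, f (node (s :: t.children)) := by
  rw [Finset.sum_congr rfl fun p _ => Finset.sum_sigma' _ _ _, Finset.sum_sigma']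
  symm
  refine Finset.sum_bij (fun x _ => node (x.2.1 :: x.2.2.children)) ?_ ?_ ?_ (fun _ _ => rfl)
  · rintro ⟨⟨a, b⟩, s, t⟩ hx
    simp only [Finset.mem_sigma, Finset.HasAntidiagonal.mem_antidiagonal, Finset.mem_filter,
      hF] at hx ⊢
    have := size_eq_one_add_sum_children t
    simp only [size_node, List.map_cons, List.sum_cons, children_node, List.length_cons]
    omega
  · rintro ⟨⟨a, b⟩, s, t⟩ hx ⟨⟨a', b'⟩, s', t'⟩ hx' heq
    simp only [Finset.mem_sigma, Finset.HasAntidiagonal.mem_antidiagonal, Finset.mem_filter,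
      hF] at hx hx'
    simp only [node.injEq, List.cons.injEq] at heq
    obtain ⟨rfl, hchildren⟩ := heq
    obtain rfl : t = t' := by rw [← node_children t, ← node_children t', hchildren]
    obtain rfl : a = a' := hx.2.1.symm.trans hx'.2.1
    obtain rfl : b = b' := by omega
    rfl
  · rintro ⟨l⟩ ht
    simp only [Finset.mem_filter, hF, children_node] at ht
    obtain ⟨hsize, hlength⟩ := ht
    obtain _ | ⟨s, l⟩ := l
    · simp at hlength
    · rw [size_node, List.map_cons, List.sum_cons] at hsize
      refine ⟨⟨(size s, (l.map size).sum), s, node l⟩, ?_, rfl⟩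
      simp only [Finset.mem_sigma, Finset.HasAntidiagonal.mem_antidiagonal, Finset.mem_filter,
        hF, size_node, children_node]
      simp only [List.length_cons, Nat.add_right_cancel_iff] at hlength
      exact ⟨by omega, trivial, by omega, hlength⟩

theorem coeff_pow_eq_sum_children {R : Type*} [CommSemiring R] (g : PTree → R)
    (Y : PowerSeries R) (hY : ∀ k, PowerSeries.coeff k Y = ∑ t ∈ F k, g t) (j n : ℕ) :
    PowerSeries.coeff n (Y ^ j) =
      ∑ t ∈ F (n + 1) with t.children.length = j, (t.children.map g).prod := by
  induction j generalizing n with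
  | zero =>
    have hleaf : ∀ t ∈ F (n + 1), t.children.length = 0 ↔ node [] = t := fun t _ => by
      rw [List.length_eq_zero_iff, ← node_children t, children_node, node.injEq, eq_comm]
    rw [Finset.filter_congr hleaf, Finset.filter_eq, pow_zero, PowerSeries.coeff_one]
    simp only [hF, size_node]
    split_ifs <;> simp_all
  | succ j ih =>
    rw [pow_succ', PowerSeries.coeff_mul, sum_length_children_succ hF]
    refine Finset.sum_congr rfl fun p _ => ?_
    rw [hY, ih, Finset.sum_mul_sum]
    simp only [children_node, List.map_cons, List.prod_cons]

theorem sum_mul_coeff_pow_eq_sum {R : Type*} [CommSemiring R] (ψ : ℕ → R) (g : PTree → R)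
    (Y : PowerSeries R) (hY : ∀ k, PowerSeries.coeff k Y = ∑ t ∈ F k, g t) (n : ℕ) :
    ∑ j ∈ Finset.range (n + 1), ψ j * PowerSeries.coeff n (Y ^ j) =
      ∑ t ∈ F (n + 1), ψ t.children.length * (t.children.map g).prod := by
  have hdegree : ∀ t ∈ F (n + 1), t.children.length ∈ Finset.range (n + 1) := fun t ht => by
    rw [Finset.mem_range, ← (hF _ t).1 ht]
    exact length_children_lt_size t
  rw [← Finset.sum_fiberwise_of_maps_to hdegree]
  refine Finset.sum_congr rfl fun j _ => ?_
  rw [coeff_pow_eq_sum_children hF g Y hY, Finset.mul_sum]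
  exact Finset.sum_congr rfl fun t ht => by rw [(Finset.mem_filter.1 ht).2]

theorem sum_mul_coeff_pow_eq_sum_nodeProd_mul_wt (B ψ : ℕ → ℝ) (Y : PowerSeries ℝ)
    (hY : ∀ k, PowerSeries.coeff k Y = ∑ t ∈ F k, B (size t) * (nodeProd B t * wt ψ t))
    (n : ℕ) :
    ∑ j ∈ Finset.range (n + 1), ψ j * PowerSeries.coeff n (Y ^ j) =
      ∑ t ∈ F (n + 1), nodeProd B t * wt ψ t := by
  rw [sum_mul_coeff_pow_eq_sum hF ψ _ Y hY]
  exact Finset.sum_congr rfl fun t _ => (nodeProd_mul_wt B ψ t).symm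

end Enumeration

end PTree

open PTree in
theorem wigner_trace_series_solves_master_equation_general
    (μm : ℕ → ℝ) (hμ1 : μm 1 = 1)
    (Br : ℕ → ℝ)
    (F : ℕ → Finset PTree) (hF : ∀ n (t : PTree), t ∈ F n ↔ size t = n)
    (B2 : ℕ → ℝ) (hB20 : B2 0 = 1)
    (hB2 : ∀ k : ℕ, 1 ≤ k → B2 k =
      ∑ t ∈ F (k + 1), nodeProd Br t * wt (fun d => μm (d + 1)) t)
    (Lr : ℕ → ℝ)
    (hBr : ∀ k : ℕ, 1 ≤ k → Br k = Lr k / (k : ℝ))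
    (Y : PowerSeries ℝ)
    (hY : Y = PowerSeries.mk (fun k => if k = 0 then 0 else Br k * B2 (k - 1)))
    (c : ℕ → ℝ)
    (hc : ∀ n, c n = ∑ j ∈ Finset.range (n + 1),
      (if j = 0 then 1 else μm (j + 1)) * PowerSeries.coeff n (Y ^ j)) :
    ∀ n : ℕ, ((n : ℝ) + 1) * PowerSeries.coeff (n + 1) Y = Lr (n + 1) * c n := by
  intro n
  set ψ : ℕ → ℝ := fun d => μm (d + 1) with hψ
  have hB2_trees : ∀ k, B2 k = ∑ t ∈ F (k + 1), nodeProd Br t * wt ψ t := by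
    rintro (_ | k)
    · simp [eq_singleton_leaf_of_size_one hF, nodeProd_node, wt_node, hB20, hψ, hμ1]
    · exact hB2 _ k.succ_pos
  have hY_trees :
      ∀ k, PowerSeries.coeff k Y = ∑ t ∈ F k, Br (size t) * (nodeProd Br t * wt ψ t) := by
    rintro (_ | k)
    · simp [hY, eq_empty_of_size_zero hF]
    · rw [hY, PowerSeries.coeff_mk, if_neg k.succ_ne_zero, Nat.add_sub_cancel, hB2_trees,
        Finset.mul_sum]
      exact Finset.sum_congr rfl fun t ht => by rw [(hF _ t).1 ht]
  have hc_B2 : c n = B2 n := by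
    rw [hc, hB2_trees, ← sum_mul_coeff_pow_eq_sum_nodeProd_mul_wt hF Br ψ Y hY_trees]
    refine Finset.sum_congr rfl fun j _ => ?_
    split_ifs with hj <;> simp [hj, hψ, hμ1]
  have hY_succ : PowerSeries.coeff (n + 1) Y = Br (n + 1) * B2 n := by simp [hY]
  rw [hY_succ, hc_B2, hBr (n + 1) n.succ_pos]
  push_cast
  field_simp

open PTree in
/-- Suppose `B^r_k = β²r(2k−1) = L^r(k)/k` for a master function
`L^r(k) = ∑ₘ Lₘ kᵐ`.  With `B_{2k}(r)` the limiting normalized traces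
(`B_0(r) = 1` and `B_{2k}(r) = ∑_{t∈ℱ_{k+1}} (∏_{w≠root} B^r_{|t_w|})·(∏_v μ_{d(v)+1})`),
the formal power series `Y(z) = ∑_{k≥1} B^r_k·B_{2(k−1)}(r)·zᵏ` solves
`Y' = L^r(1+θ)ψ_μ(Y)`; coefficientwise: `(n+1)[z^{n+1}]Y = L^r(n+1)·cₙ`, where
`cₙ = [zⁿ](ψ_μ∘Y)` and `ψ_μ(z) = 1 + ∑_{k≥1} μ_{k+1} zᵏ`. -/
theorem wigner_trace_series_solves_master_equation
    (β : ℝ) (hβ : 0 < β) (r : ℕ → ℝ) (μm : ℕ → ℝ) (hμ1 : μm 1 = 1)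
    (Br : ℕ → ℝ) (hBrdef : ∀ k : ℕ, 1 ≤ k → Br k = β ^ 2 * r (2 * k - 1))
    (F : ℕ → Finset PTree) (hF : ∀ n (t : PTree), t ∈ F n ↔ size t = n)
    (B2 : ℕ → ℝ) (hB20 : B2 0 = 1)
    (hB2 : ∀ k : ℕ, 1 ≤ k → B2 k =
      ∑ t ∈ F (k + 1), nodeProd Br t * wt (fun d => μm (d + 1)) t)
    (L : ℕ → ℝ)
    (hL : ∀ k : ℕ, 1 ≤ k → Summable (fun m => |L m| * (k : ℝ) ^ m))
    (Lr : ℕ → ℝ) (hLr : ∀ k : ℕ, Lr k = ∑' m : ℕ, L m * (k : ℝ) ^ m)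
    (hBr : ∀ k : ℕ, 1 ≤ k → Br k = Lr k / (k : ℝ))
    (Y : PowerSeries ℝ)
    (hY : Y = PowerSeries.mk (fun k => if k = 0 then 0 else Br k * B2 (k - 1)))
    (c : ℕ → ℝ)
    (hc : ∀ n, c n = ∑ j ∈ Finset.range (n + 1),
      (if j = 0 then 1 else μm (j + 1)) * PowerSeries.coeff n (Y ^ j)) :
    ∀ n : ℕ, ((n : ℝ) + 1) * PowerSeries.coeff (n + 1) Y = Lr (n + 1) * c n :=
  wigner_trace_series_solves_master_equation_general μm hμ1 Br F hF B2 hB20 hB2 Lr hBr Y hY c hc
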